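/- For every finite word w over {0,1,2}, the following hold. Let z_j denote the j-th column of M_w (j = 0,1,2) and z = z_0 + z_1 + z_2. Then (1,1,1)z = S^(w) > 0 and tau_j := (1,1,1)(z_j + (1/3)z) > 0 for each j; and there exists a unique triple (b_0, b_1, b_2) in R^3 satisfying sum_{j=0}^{2} b_j (z_j + (1/3)z)/tau_j = z/((1,1,1)z). This unique solution is given by b_j = (1,1,1)((1/6)z + (1/2)z_j) / ((1,1,1)z) = b_j^(w), and it satisfies b_0 + b_1 + b_2 = 1. -/

import Mathlib

/-
Write `τ = (τ₀, τ₁, τ₂)`. Since `τⱼ = cⱼ + S/3`, we have `∑ τⱼ = 2S` and `bⱼ^(w) = τⱼ / (2S)`, so the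
coefficients `bⱼ^(w) / τⱼ` all equal `1/(2S)` and the system reduces to `∑ⱼ (zⱼ + z/3) = 2z`.
The vectors `zⱼ + z/3` are the columns of `M_w K` with `K = I + J/3`, an invertible matrix, which
gives uniqueness.

Positivity of `τ` is the substance. Each `M_i K` is symmetric, so appending a letter `i` to `w`
acts on `τ` by `τ ↦ M_i τ`. This map multiplies the form
`Q(t) = t₀² + t₁² + t₂² - 2(t₀t₁ + t₁t₂ + t₂t₀)` by `1/25` and, as the column sums of `M_i` are
positive, keeps `∑ τⱼ` positive. Starting from `τ = (2, 2, 2)`, `Q(τ) = -12`, so `τ` stays in the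
cone `Q < 0`, whose coordinates all share one sign.
-/

open Matrix BigOperators

/-- The matrix `M_0`. -/
noncomputable def M0 : Matrix (Fin 3) (Fin 3) ℝ :=
  (1 / 15 : ℝ) • !![9, 0, 0; 2, 2, -1; 2, -1, 2]

/-- The matrix `M_1`. -/
noncomputable def M1 : Matrix (Fin 3) (Fin 3) ℝ :=
  (1 / 15 : ℝ) • !![2, 2, -1; 0, 9, 0; -1, 2, 2]

/-- The matrix `M_2`. -/
noncomputable def M2 : Matrix (Fin 3) (Fin 3) ℝ :=
  (1 / 15 : ℝ) • !![2, -1, 2; -1, 2, 2; 0, 0, 9]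

/-- `Mmat i` is the matrix `M_i`. -/
noncomputable def Mmat : Fin 3 → Matrix (Fin 3) (Fin 3) ℝ := ![M0, M1, M2]

/-- For a word `w = [w₁, ..., wₘ]`, `Mword w = M_{w₁} * ⋯ * M_{wₘ}`
(the empty word giving the identity matrix). -/
noncomputable def Mword (w : List (Fin 3)) : Matrix (Fin 3) (Fin 3) ℝ :=
  (w.map Mmat).prod

/-- The `j`-th column `z_j` of `M_w`, as a vector in `ℝ³`. -/
noncomputable def zcol (w : List (Fin 3)) (j : Fin 3) : Fin 3 → ℝ :=
  fun i => Mword w i j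

/-- The vector `z = z₀ + z₁ + z₂`, the sum of the columns of `M_w`. -/
noncomputable def zvec (w : List (Fin 3)) : Fin 3 → ℝ :=
  fun i => ∑ j : Fin 3, Mword w i j

/-- `c_j^(w)`, the `j`-th column sum of `M_w`, i.e. the `j`-th entry of `(1,1,1) M_w`. -/
noncomputable def cw (w : List (Fin 3)) (j : Fin 3) : ℝ :=
  ∑ i : Fin 3, Mword w i j

/-- `S^(w) = c₀^(w) + c₁^(w) + c₂^(w)`, the sum of all entries of `M_w`. -/
noncomputable def Sw (w : List (Fin 3)) : ℝ :=
  ∑ j : Fin 3, cw w j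

/-- The weight `b_j^(w) = 1/6 + c_j^(w) / (2 S^(w))`. -/
noncomputable def bwt (w : List (Fin 3)) (j : Fin 3) : ℝ :=
  1 / 6 + cw w j / (2 * Sw w)

/-- `τ_j = (1,1,1)(z_j + (1/3)z)`. -/
noncomputable def tauw (w : List (Fin 3)) (j : Fin 3) : ℝ :=
  ∑ i : Fin 3, (zcol w j i + (1 / 3) * zvec w i)

noncomputable def Kmat : Matrix (Fin 3) (Fin 3) ℝ := 1 + (3 : ℝ)⁻¹ • of fun _ _ => 1

lemma Mmat_mul_Kmat (i : Fin 3) : Mmat i * Kmat = Kmat * (Mmat i)ᵀ := by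
  ext j k
  fin_cases i <;> fin_cases j <;> fin_cases k <;>
    simp [Mmat, M0, M1, M2, Kmat, mul_apply, Fin.sum_univ_three, one_apply] <;> norm_num

lemma det_Mmat (i : Fin 3) : (Mmat i).det = 1 / 125 := by
  fin_cases i <;> simp [Mmat, M0, M1, M2, det_fin_three] <;> norm_num

lemma det_Kmat : Kmat.det = 2 := by
  simp [Kmat, det_fin_three, one_apply]; norm_num

lemma det_Mword_ne_zero (w : List (Fin 3)) : (Mword w).det ≠ 0 := by
  induction w with
  | nil => simp [Mword]
  | cons i w ih => simpa [Mword, det_mul, det_Mmat] using ih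

lemma Mword_append (w : List (Fin 3)) (i : Fin 3) : Mword (w ++ [i]) = Mword w * Mmat i := by
  simp [Mword]

lemma Mword_mul_Kmat_apply (w : List (Fin 3)) (i j : Fin 3) :
    (Mword w * Kmat) i j = zcol w j i + 1 / 3 * zvec w i := by
  rw [Kmat, Matrix.mul_add, Matrix.mul_one, Matrix.mul_smul]
  simp [mul_apply, zcol, zvec, mul_comm]

lemma tauw_eq_vecMul (w : List (Fin 3)) : tauw w = (fun _ => 1) ᵥ* (Mword w * Kmat) := by
  ext j
  simp [tauw, vecMul, dotProduct, Mword_mul_Kmat_apply]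

lemma tauw_append (w : List (Fin 3)) (i : Fin 3) : tauw (w ++ [i]) = Mmat i *ᵥ tauw w := by
  rw [tauw_eq_vecMul, tauw_eq_vecMul, Mword_append, Matrix.mul_assoc, Mmat_mul_Kmat,
    ← Matrix.mul_assoc, ← vecMul_vecMul, vecMul_transpose]

lemma sum_smul_zcol_add (w : List (Fin 3)) (x : Fin 3 → ℝ) :
    ∑ j, x j • (zcol w j + (1 / 3 : ℝ) • zvec w) = (Mword w * Kmat) *ᵥ x := by
  ext i
  simp [mulVec, dotProduct, Mword_mul_Kmat_apply, Finset.sum_apply, mul_comm, mul_add]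

def coneForm (t : Fin 3 → ℝ) : ℝ :=
  t 0 ^ 2 + t 1 ^ 2 + t 2 ^ 2 - 2 * (t 0 * t 1 + t 1 * t 2 + t 2 * t 0)

lemma coneForm_Mmat_mulVec (i : Fin 3) (t : Fin 3 → ℝ) :
    coneForm (Mmat i *ᵥ t) = coneForm t / 25 := by
  fin_cases i <;> simp [coneForm, Mmat, M0, M1, M2, mulVec, dotProduct, Fin.sum_univ_three] <;> ring

lemma sum_Mmat_mulVec_pos (i : Fin 3) {t : Fin 3 → ℝ} (ht : ∀ j, 0 < t j) :
    0 < ∑ j, (Mmat i *ᵥ t) j := by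
  have := ht 0; have := ht 1; have := ht 2
  fin_cases i <;> simp [Mmat, M0, M1, M2, mulVec, dotProduct, Fin.sum_univ_three] <;> linarith

lemma pos_of_coneForm_neg {t : Fin 3 → ℝ} (hQ : coneForm t < 0) (hsum : 0 < ∑ j, t j) :
    ∀ j, 0 < t j := by
  rw [coneForm] at hQ
  rw [Fin.sum_univ_three] at hsum
  -- `coneForm t = (t₂ - t₀ - t₁)² - 4 t₀ t₁`, and symmetrically, so all coordinates share a sign
  have h01 : 0 < t 0 * t 1 := by nlinarith [sq_nonneg (t 2 - t 0 - t 1)]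
  have h12 : 0 < t 1 * t 2 := by nlinarith [sq_nonneg (t 0 - t 1 - t 2)]
  have h20 : 0 < t 2 * t 0 := by nlinarith [sq_nonneg (t 1 - t 2 - t 0)]
  have h0 : 0 < t 0 := by
    by_contra! h
    nlinarith
  intro j
  fin_cases j
  · exact h0
  · exact pos_of_mul_pos_right h01 h0.le
  · exact pos_of_mul_pos_left h20 h0.le

lemma tauw_nil : tauw [] = fun _ => 2 := by
  ext j
  fin_cases j <;> simp [tauw, zcol, zvec, Mword, one_apply, Fin.sum_univ_three] <;> norm_num

lemma tauw_pos_and_coneForm_neg (w : List (Fin 3)) :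
    (∀ j, 0 < tauw w j) ∧ coneForm (tauw w) < 0 := by
  induction w using List.reverseRecOn with
  | nil =>
    rw [tauw_nil, coneForm]
    norm_num
  | append_singleton w i ih =>
    have hQ : coneForm (tauw (w ++ [i])) < 0 := by
      rw [tauw_append, coneForm_Mmat_mulVec]
      linarith [ih.2]
    refine ⟨pos_of_coneForm_neg hQ ?_, hQ⟩
    rw [tauw_append]
    exact sum_Mmat_mulVec_pos i ih.1

lemma tauw_pos (w : List (Fin 3)) (j : Fin 3) : 0 < tauw w j :=
  (tauw_pos_and_coneForm_neg w).1 j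

lemma tauw_eq (w : List (Fin 3)) (j : Fin 3) : tauw w j = cw w j + Sw w / 3 := by
  simp only [tauw, zcol, zvec, cw, Sw, Finset.sum_add_distrib, ← Finset.mul_sum]
  rw [Finset.sum_comm]
  ring

lemma sum_tauw (w : List (Fin 3)) : ∑ j, tauw w j = 2 * Sw w := by
  simp only [tauw_eq, Finset.sum_add_distrib, Sw]
  simp
  ring

lemma Sw_pos (w : List (Fin 3)) : 0 < Sw w := by
  have := Finset.sum_pos (fun j _ => tauw_pos w j) Finset.univ_nonempty
  linarith [sum_tauw w]

lemma sum_zcol (w : List (Fin 3)) : ∑ j, zcol w j = zvec w := by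
  ext i
  simp [zcol, zvec, Finset.sum_apply]

lemma sum_zvec (w : List (Fin 3)) : ∑ i, zvec w i = Sw w :=
  Finset.sum_comm

lemma sum_zcol_add_smul_zvec (w : List (Fin 3)) :
    ∑ j, (zcol w j + (1 / 3 : ℝ) • zvec w) = (2 : ℝ) • zvec w := by
  rw [Finset.sum_add_distrib, sum_zcol, Finset.sum_const, Finset.card_univ, Fintype.card_fin]
  module

lemma bwt_eq_tauw_div (w : List (Fin 3)) (j : Fin 3) : bwt w j = tauw w j / (2 * Sw w) := by
  have := (Sw_pos w).ne'
  rw [bwt, tauw_eq]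
  field_simp
  ring

lemma bwt_eq_sum_div (w : List (Fin 3)) (j : Fin 3) :
    bwt w j = (∑ i, ((1 / 6) * zvec w i + (1 / 2) * zcol w j i)) / Sw w := by
  have := (Sw_pos w).ne'
  rw [Finset.sum_add_distrib, ← Finset.mul_sum, ← Finset.mul_sum, sum_zvec, bwt]
  change _ = (1 / 6 * Sw w + 1 / 2 * cw w j) / Sw w
  field_simp

lemma sum_bwt (w : List (Fin 3)) : ∑ j, bwt w j = 1 := by
  simp only [bwt_eq_tauw_div, ← Finset.sum_div, sum_tauw]
  exact div_self (mul_ne_zero two_ne_zero (Sw_pos w).ne')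

lemma sum_bwt_div_tauw_smul (w : List (Fin 3)) :
    ∑ j, (bwt w j / tauw w j) • (zcol w j + (1 / 3 : ℝ) • zvec w) = (Sw w)⁻¹ • zvec w := by
  have hcoef (j : Fin 3) : bwt w j / tauw w j = (2 * Sw w)⁻¹ := by
    rw [bwt_eq_tauw_div, div_div_cancel_left' (tauw_pos w j).ne']
  simp only [hcoef, ← Finset.smul_sum, sum_zcol_add_smul_zvec, smul_smul]
  field_simp

lemma injective_sum_div_tauw_smul (w : List (Fin 3)) :
    Function.Injective fun b : Fin 3 → ℝ =>
      ∑ j, (b j / tauw w j) • (zcol w j + (1 / 3 : ℝ) • zvec w) := by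
  have hdet : (Mword w * Kmat).det ≠ 0 := by
    rw [det_mul, det_Kmat]
    exact mul_ne_zero (det_Mword_ne_zero w) two_ne_zero
  intro b b' h
  simp only [sum_smul_zcol_add] at h
  funext j
  exact (div_left_inj' (tauw_pos w j).ne').1 (congrFun (mulVec_injective_of_det_ne_zero hdet h) j)

/-- For every word `w`: `S^(w) = (1,1,1)z > 0`, each `τ_j = (1,1,1)(z_j + (1/3)z) > 0`,
there is a unique triple `(b₀,b₁,b₂)` with
`∑_j b_j (z_j + (1/3)z)/τ_j = z/((1,1,1)z)`, this unique solution is given by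
`b_j = (1,1,1)((1/6)z + (1/2)z_j)/((1,1,1)z) = b_j^(w)`, and it satisfies
`b₀ + b₁ + b₂ = 1`. -/
theorem stmt_10 (w : List (Fin 3)) :
    0 < Sw w ∧
    (∀ j : Fin 3, 0 < tauw w j) ∧
    (∃! b : Fin 3 → ℝ,
      ∑ j : Fin 3, (b j / tauw w j) • (zcol w j + (1 / 3 : ℝ) • zvec w) =
        (Sw w)⁻¹ • zvec w) ∧
    (∑ j : Fin 3, (bwt w j / tauw w j) • (zcol w j + (1 / 3 : ℝ) • zvec w) =
        (Sw w)⁻¹ • zvec w) ∧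
    (∀ j : Fin 3,
      bwt w j = (∑ i : Fin 3, ((1 / 6) * zvec w i + (1 / 2) * zcol w j i)) / Sw w) ∧
    (∑ j : Fin 3, bwt w j = 1) := by
  have hsolves := sum_bwt_div_tauw_smul w
  exact ⟨Sw_pos w, tauw_pos w,
    ⟨bwt w, hsolves, fun _ hb => injective_sum_div_tauw_smul w (hb.trans hsolves.symm)⟩,
    hsolves, bwt_eq_sum_div w, sum_bwt w⟩
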